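/- Let R be a complete regular local ring over an algebraically closed field k containing a primitive m-th root of unity ζ, where m is invertible in k, and let f : R → R be a k-algebra automorphism of order dividing m whose induced action on the cotangent space m/m² is multiplication by powers of ζ on a basis. Then there exists a regular system of parameters u_1, …, u_d ∈ R and integers n_1, …, n_d such that f(u_i) = ζ^{n_i} · u_i for all i. -/
import Mathlib


open IsLocalRing

/-- Let `R` be a complete (noetherian) local `k`-algebra over an algebraically closed
field `k` containing a primitive `m`-th root of unity `ζ`, with `m` invertible in `k`,
and let `f : R → R` be a `k`-algebra automorphism with `f^m = 1`. Suppose the induced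
action on the cotangent space is diagonal: there is a regular system of parameters
`u⁰₁, …, u⁰_d` (generating the maximal ideal) with `f(u⁰ᵢ) ≡ ζ^{n⁰ᵢ}·u⁰ᵢ mod 𝔪²`.
Then there is a regular system of parameters `u₁, …, u_d` generating the maximal
ideal and integers `n₁, …, n_d` with `f(uᵢ) = ζ^{nᵢ}·uᵢ` exactly. -/
theorem stmt_6 (k : Type*) [Field k] [IsAlgClosed k]
    (R : Type*) [CommRing R] [IsNoetherianRing R] [IsLocalRing R] [Algebra k R]
    [IsAdicComplete (maximalIdeal R) R]
    (m : ℕ) (hm : 0 < m) (hmk : (m : k) ≠ 0)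
    (ζ : k) (hζ : IsPrimitiveRoot ζ m)
    (f : R ≃ₐ[k] R) (hf : f ^ m = 1)
    (d : ℕ) (u₀ : Fin d → R)
    (hgen₀ : Ideal.span (Set.range u₀) = maximalIdeal R)
    (n₀ : Fin d → ℕ)
    (hdiag : ∀ i, f (u₀ i) - algebraMap k R (ζ ^ n₀ i) * u₀ i ∈ (maximalIdeal R) ^ 2) :
    ∃ (u : Fin d → R) (n : Fin d → ℕ),
      Ideal.span (Set.range u) = maximalIdeal R ∧
      ∀ i, f (u i) = algebraMap k R (ζ ^ n i) * u i := by
  -- f maps the maximal ideal into itself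
  have hfm : ∀ x ∈ maximalIdeal R, f x ∈ maximalIdeal R := by
    intro x hx
    rw [mem_maximalIdeal, mem_nonunits_iff] at hx ⊢
    intro h
    exact hx (by simpa using h.map f.symm)
  -- f maps 𝔪² into 𝔪²
  have hfm2 : ∀ x ∈ (maximalIdeal R) ^ 2, f x ∈ (maximalIdeal R) ^ 2 := by
    intro x hx
    rw [pow_two] at hx ⊢
    refine Submodule.mul_induction_on hx (fun a ha b hb => ?_) (fun a b ha hb => ?_)
    · rw [map_mul]; exact Ideal.mul_mem_mul (hfm a ha) (hfm b hb)
    · rw [map_add]; exact add_mem ha hb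
  -- k-scalars preserve ideals
  have hsm : ∀ (a : k) (x : R), ∀ I : Ideal R, x ∈ I → a • x ∈ I := by
    intro a x I hx
    rw [Algebra.smul_def]
    exact Ideal.mul_mem_left _ _ hx
  classical
  set w : Fin d → k := fun i => ζ ^ n₀ i with hw
  have hw0 : ∀ i, w i ≠ 0 := fun i => pow_ne_zero _ (hζ.ne_zero hm.ne')
  have hwm : ∀ i, (w i) ^ m = 1 := by
    intro i
    rw [hw]
    rw [← pow_mul, mul_comm, pow_mul, hζ.pow_eq_one, one_pow]
  -- iterated action mod 𝔪²
  have hiter : ∀ i j, (f ^ j) (u₀ i) - (w i) ^ j • u₀ i ∈ (maximalIdeal R) ^ 2 := by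
    intro i j
    induction j with
    | zero => simp
    | succ j ih =>
      have h1 : (f ^ (j + 1)) (u₀ i) = f ((f ^ j) (u₀ i)) := by
        rw [pow_succ']; rfl
      have : (f ^ (j+1)) (u₀ i) - (w i) ^ (j+1) • u₀ i =
          f ((f ^ j) (u₀ i) - (w i) ^ j • u₀ i)
          + (w i) ^ j • (f (u₀ i) - (w i) • u₀ i) := by
        rw [h1, map_sub, map_smul, smul_sub, smul_smul, ← pow_succ]
        abel
      rw [this]
      refine add_mem (hfm2 _ ih) (hsm _ _ _ ?_)
      have := hdiag i
      rwa [← Algebra.smul_def] at this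
  -- the averaged elements
  set u : Fin d → R := fun i =>
    (m : k)⁻¹ • ∑ j ∈ Finset.range m, ((w i)⁻¹) ^ j • (f ^ j) (u₀ i) with hu
  refine ⟨u, n₀, ?_, ?_⟩
  · -- span = maximal ideal, via Nakayama
    have hdiff : ∀ i, u i - u₀ i ∈ (maximalIdeal R) ^ 2 := by
      intro i
      have : u i - u₀ i =
          (m : k)⁻¹ • ∑ j ∈ Finset.range m,
            (((w i)⁻¹) ^ j • (f ^ j) (u₀ i) - u₀ i) := by
        rw [hu, Finset.sum_sub_distrib, smul_sub]
        congr 1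
        rw [Finset.sum_const, Finset.card_range, ← Nat.cast_smul_eq_nsmul k, smul_smul,
          inv_mul_cancel₀ hmk, one_smul]
      rw [this]
      refine hsm _ _ _ (Submodule.sum_mem _ fun j _ => ?_)
      have h2 : ((w i)⁻¹) ^ j • (f ^ j) (u₀ i) - u₀ i =
          ((w i)⁻¹) ^ j • ((f ^ j) (u₀ i) - (w i) ^ j • u₀ i) := by
        rw [smul_sub, smul_smul, ← mul_pow, inv_mul_cancel₀ (hw0 i), one_pow, one_smul]
      rw [h2]
      exact hsm _ _ _ (hiter i j)
    -- u i ∈ 𝔪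
    have hum : ∀ i, u i ∈ maximalIdeal R := by
      intro i
      have h0 : u₀ i ∈ maximalIdeal R := by
        rw [← hgen₀]; exact Ideal.subset_span ⟨i, rfl⟩
      have := add_mem ((Ideal.pow_le_self two_ne_zero) (hdiff i)) h0
      simpa using this
    have hle : maximalIdeal R ≤ Ideal.span (Set.range u) ⊔
        maximalIdeal R • (maximalIdeal R : Ideal R) := by
      conv_lhs => rw [← hgen₀]
      rw [Ideal.span_le]
      rintro _ ⟨i, rfl⟩
      have h1 : u i ∈ Ideal.span (Set.range u) := Ideal.subset_span ⟨i, rfl⟩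
      have h2 : u i - u₀ i ∈ maximalIdeal R • (maximalIdeal R : Ideal R) := by
        rw [Ideal.smul_eq_mul, ← pow_two]; exact hdiff i
      have : u₀ i = u i - (u i - u₀ i) := by ring
      rw [this]
      exact Submodule.sub_mem _ (Ideal.mem_sup_left h1) (Ideal.mem_sup_right h2)
    have hnak := Submodule.le_of_le_smul_of_le_jacobson_bot
      (IsNoetherian.noetherian (maximalIdeal R))
      (by rw [IsLocalRing.jacobson_eq_maximalIdeal ⊥ bot_ne_top]) hle
    refine le_antisymm ?_ hnak
    rw [Ideal.span_le]
    rintro _ ⟨i, rfl⟩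
    exact hum i
  · -- the eigenvector property
    intro i
    rw [← Algebra.smul_def]
    have hfx : ∀ x : R, ∀ j : ℕ, f ((f ^ j) x) = (f ^ (j+1)) x := by
      intro x j; rw [pow_succ']; rfl
    rw [hu]
    simp only []
    rw [map_smul, smul_comm]
    congr 1
    rw [map_sum]
    calc ∑ j ∈ Finset.range m, f (((w i)⁻¹) ^ j • (f ^ j) (u₀ i))
        = ∑ j ∈ Finset.range m, (fun j => w i • ((w i)⁻¹) ^ j • (f ^ j) (u₀ i)) (j + 1) := by
          refine Finset.sum_congr rfl fun j _ => ?_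
          rw [map_smul, hfx]
          show ((w i)⁻¹) ^ j • (f ^ (j+1)) (u₀ i)
              = w i • ((w i)⁻¹) ^ (j+1) • (f ^ (j+1)) (u₀ i)
          rw [smul_smul]
          congr 1
          rw [pow_succ, mul_comm ((w i)⁻¹ ^ j) ((w i)⁻¹), ← mul_assoc,
            mul_inv_cancel₀ (hw0 i), one_mul]
      _ = ∑ j ∈ Finset.range m, (fun j => w i • ((w i)⁻¹) ^ j • (f ^ j) (u₀ i)) j := by
          have hsucc := Finset.sum_range_succ'
            (fun j => w i • ((w i)⁻¹) ^ j • (f ^ j) (u₀ i)) m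
          have hsucc2 := Finset.sum_range_succ
            (fun j => w i • ((w i)⁻¹) ^ j • (f ^ j) (u₀ i)) m
          have hend : w i • ((w i)⁻¹) ^ m • (f ^ m) (u₀ i)
              = w i • ((w i)⁻¹) ^ 0 • (f ^ 0) (u₀ i) := by
            rw [hf, inv_pow, hwm, inv_one]
            simp
          have h3 := hsucc.symm.trans hsucc2
          simp only [] at h3 ⊢
          rw [hend] at h3
          exact add_right_cancel h3
      _ = w i • ∑ j ∈ Finset.range m, ((w i)⁻¹) ^ j • (f ^ j) (u₀ i) := by
          rw [Finset.smul_sum]
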